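/- arXiv:1506.00018 — 2 statements merged into one kernel-verified Lean document; each statement's English description precedes it below -/
import Mathlib

section
/- Let X be a Lefschetz complex over a ring R with unity, let 𝒱 be a multivector field on X, and assume X is invariant with respect to 𝒱. For A ⊆ X the following conditions are equivalent: (i) A is an attractor; (ii) A is invariant and closed; (iii) A is an isolated invariant set and closed; (iv) A is an isolated invariant set, closed, and a trapping region. -/
open scoped Classical

namespace CMVF

variable {R : Type*} [Ring R] {X : Type*} [Fintype X]

/-- A Lefschetz complex over `R` with cells `X`. -/
structure Lefschetz (R : Type*) [Ring R] (X : Type*) [Fintype X] where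
  dim : X → ℕ
  κ : X → X → R
  dim_facet : ∀ x y, κ x y ≠ 0 → dim x = dim y + 1
  κ_sq : ∀ x z, (∑ y : X, κ x y * κ y z) = 0

namespace Lefschetz

variable (L : Lefschetz R X)

/-- The face order `y ≤κ x` : the partial order generated by the facet relation. -/
def le (y x : X) : Prop := Relation.ReflTransGen (fun a b => L.κ b a ≠ 0) y x

/-- Closure of a set of cells: all faces of cells of `A`. -/
def cls (A : Set X) : Set X := {z | ∃ a ∈ A, L.le z a}

/-- Closure of a single cell. -/
def clPt (x : X) : Set X := L.cls {x}

/-- The minimal open set containing `x`. -/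
def opn (x : X) : Set X := {z | L.le x z}

/-- `A` is closed. -/
def Closed (A : Set X) : Prop := L.cls A = A

/-- The mouth of `A`. -/
def mo (A : Set X) : Set X := L.cls A \ A

/-- `A` is proper: its mouth is closed. -/
def Proper (A : Set X) : Prop := L.Closed (L.mo A)

/-- Relative closure within an ambient subcomplex `W`. -/
def clsIn (W A : Set X) : Set X := L.cls A ∩ W

/-- Relative mouth within an ambient subcomplex `W`. -/
def moIn (W A : Set X) : Set X := L.clsIn W A \ A

/-- The boundary operator of the subcomplex determined by `A`
(`∂ x = ∑ y ∈ A, κ x y • y` for `x ∈ A`). -/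
noncomputable def bd (A : Set X) : (X → R) →ₗ[R] (X → R) where
  toFun f := fun y => if y ∈ A then ∑ x : X, (if x ∈ A then f x * L.κ x y else 0) else 0
  map_add' f g := by
    funext y
    by_cases hy : y ∈ A
    · simp only [hy, if_true, Pi.add_apply]
      rw [← Finset.sum_add_distrib]
      refine Finset.sum_congr rfl fun x _ => ?_
      by_cases hx : x ∈ A <;> simp [hx, add_mul]
    · simp [hy]
  map_smul' r f := by
    funext y
    by_cases hy : y ∈ A
    · simp only [hy, if_true, Pi.smul_apply, smul_eq_mul, RingHom.id_apply]
      rw [Finset.mul_sum]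
      refine Finset.sum_congr rfl fun x _ => ?_
      by_cases hx : x ∈ A <;> simp [hx, mul_assoc]
    · simp [hy]

/-- The `n`-chains of the subcomplex determined by `A`. -/
noncomputable def chainGroup (A : Set X) (n : ℕ) : Submodule R (X → R) :=
  Submodule.span R {f | ∃ x ∈ A, L.dim x = n ∧ f = Pi.single x 1}

/-- The `n`-cycles of the subcomplex determined by `A`. -/
noncomputable def cycles (A : Set X) (n : ℕ) : Submodule R (X → R) :=
  L.chainGroup A n ⊓ LinearMap.ker (L.bd A)

/-- The `n`-boundaries of the subcomplex determined by `A`. -/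
noncomputable def boundaries (A : Set X) (n : ℕ) : Submodule R (X → R) :=
  (L.chainGroup A (n + 1)).map (L.bd A)

/-- The Lefschetz homology `H^κ_n(A)` of the subcomplex determined by `A`. -/
noncomputable def homology (A : Set X) (n : ℕ) : Type _ :=
  (L.cycles A n) ⧸ ((L.boundaries A n).comap (L.cycles A n).subtype)

noncomputable instance homologyAddCommGroup (A : Set X) (n : ℕ) :
    AddCommGroup (L.homology A n) :=
  inferInstanceAs (AddCommGroup
    ((L.cycles A n) ⧸ ((L.boundaries A n).comap (L.cycles A n).subtype)))

noncomputable instance homologyModule (A : Set X) (n : ℕ) :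
    Module R (L.homology A n) :=
  inferInstanceAs (Module R
    ((L.cycles A n) ⧸ ((L.boundaries A n).comap (L.cycles A n).subtype)))

/-- `A` is a zero space: its Lefschetz homology vanishes. -/
def HomologyZero (A : Set X) : Prop := ∀ n, Subsingleton (L.homology A n)

/-- The Poincaré polynomial `p_A(t) = ∑ rank H^κ_n(A) tⁿ`. -/
noncomputable def poincare (A : Set X) : Polynomial ℕ :=
  ∑ n ∈ Finset.image L.dim Finset.univ,
    Polynomial.C (Module.finrank R (L.homology A n)) * Polynomial.X ^ n

/-- `V` is a multivector: proper, with a unique maximal element. -/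
def IsMV (V : Set X) : Prop :=
  L.Proper V ∧ ∃! m, m ∈ V ∧ ∀ x ∈ V, L.le x m

/-- A regular multivector: one with vanishing Lefschetz homology. -/
def Regular (V : Set X) : Prop := L.HomologyZero V

end Lefschetz

/-- A combinatorial multivector field on a Lefschetz complex: a partition into multivectors. -/
structure MVField {R : Type*} [Ring R] {X : Type*} [Fintype X] (L : Lefschetz R X) where
  mvs : Set (Set X)
  isMV : ∀ V ∈ mvs, L.IsMV V
  cover : ∀ x : X, ∃! V, V ∈ mvs ∧ x ∈ V

namespace MVField

variable {L : Lefschetz R X} (F : MVField L)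

/-- `[x]` : the multivector containing `x`. -/
noncomputable def mclass (x : X) : Set X := (F.cover x).exists.choose

lemma mclass_spec (x : X) : F.mclass x ∈ F.mvs ∧ x ∈ F.mclass x :=
  (F.cover x).exists.choose_spec

/-- `x★` : the dominant cell of the multivector containing `x`. -/
noncomputable def star (x : X) : X :=
  ((F.isMV _ (F.mclass_spec x).1).2).exists.choose

/-- `[x]°` : the regular part of the multivector of `x`. -/
noncomputable def regPart (x : X) : Set X :=
  if L.Regular (F.mclass x) then F.mclass x else F.mclass x \ {F.star x}

/-- The multivalued map `Π_𝒱`. -/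
noncomputable def Pi (x : X) : Set X :=
  if x = F.star x then L.clPt x \ F.regPart x else {F.star x}

/-- The multivalued map of the multivector field restricted to the subcomplex `W`. -/
noncomputable def PiIn (W : Set X) (x : X) : Set X := F.Pi x ∩ W

/-- `φ : ℤ → X` is a full solution of the multivector field restricted to `W`. -/
def IsSolIn (W : Set X) (φ : ℤ → X) : Prop := ∀ i, φ (i + 1) ∈ F.PiIn W (φ i)

/-- There is a full solution (of the field restricted to `W`) through `x` with values in `A`. -/
def FullSolThroughIn (W : Set X) (x : X) (A : Set X) : Prop :=
  ∃ φ : ℤ → X, F.IsSolIn W φ ∧ (∃ i, φ i = x) ∧ ∀ i, φ i ∈ A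

/-- `A` is `𝒱`-compatible. -/
def Compat (A : Set X) : Prop := ∀ x ∈ A, F.mclass x ⊆ A

/-- `[A]⁻` : the maximal `𝒱`-compatible subset of `A`. -/
def lowerC (A : Set X) : Set X := {x ∈ A | F.mclass x ⊆ A}

/-- `[A]⁺` : the minimal `𝒱`-compatible superset of `A`. -/
def upperC (A : Set X) : Set X := ⋃ x ∈ A, F.mclass x

/-- `Inv A`, the invariant part of `A`, computed in the subcomplex `W`. -/
def InvPartIn (W A : Set X) : Set X :=
  {x ∈ A | F.FullSolThroughIn W (F.star x) (F.lowerC A)}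

/-- `A` is invariant (within the subcomplex `W`). -/
def InvariantIn (W A : Set X) : Prop := F.InvPartIn W A = A

/-- `φ` is a path (solution) on the integer interval `[a,b]`, within the subcomplex `W`. -/
def IsPathOnIn (W : Set X) (a b : ℤ) (φ : ℤ → X) : Prop :=
  ∀ i, a ≤ i → i < b → φ (i + 1) ∈ F.PiIn W (φ i)

/-- `S` admits an internal tangency within the subcomplex `W`. -/
def HasInternalTangencyIn (W S : Set X) : Prop :=
  ∃ (a b : ℤ) (φ : ℤ → X), a ≤ b ∧ F.IsPathOnIn W a b φ ∧
    (∀ i, a ≤ i → i ≤ b → φ i ∈ L.clsIn W S) ∧ φ a ∈ S ∧ φ b ∈ S ∧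
    ∃ i, a ≤ i ∧ i ≤ b ∧ φ i ∈ L.moIn W S

/-- `S` is an isolated invariant set within the subcomplex `W`. -/
def IsoInvIn (W S : Set X) : Prop :=
  F.InvariantIn W S ∧ ¬ F.HasInternalTangencyIn W S

/-- `N` is a trapping region within the subcomplex `W`. -/
def TrappingIn (W N : Set X) : Prop :=
  N ⊆ W ∧ F.Compat N ∧ ∀ x ∈ N, F.PiIn W x ⊆ N

/-- `N` is a backward trapping region within the subcomplex `W`. -/
def BackTrappingIn (W N : Set X) : Prop :=
  N ⊆ W ∧ F.Compat N ∧ ∀ x ∈ W, ∀ y ∈ F.PiIn W x, y ∈ N → x ∈ N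

/-- `A` is an attractor within the subcomplex `W`. -/
def AttractorIn (W A : Set X) : Prop :=
  ∃ N, F.TrappingIn W N ∧ A = F.InvPartIn W N

/-- `A` is a repeller within the subcomplex `W`. -/
def RepellerIn (W A : Set X) : Prop :=
  ∃ N, F.BackTrappingIn W N ∧ A = F.InvPartIn W N

/-- The α-limit set of a full solution `φ`. -/
def alphaIn (W : Set X) (φ : ℤ → X) : Set X :=
  ⋂ k : ℕ, F.InvPartIn W (F.upperC (φ '' {i : ℤ | i ≤ -(k : ℤ)}))

/-- The ω-limit set of a full solution `φ`. -/
def omegaIn (W : Set X) (φ : ℤ → X) : Set X :=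
  ⋂ k : ℕ, F.InvPartIn W (F.upperC (φ '' {i : ℤ | (k : ℤ) ≤ i}))

/-- `C(A',A)` : the set of cells lying on connections running from `A'` to `A`. -/
def ConnIn (W A' A : Set X) : Set X :=
  {x | ∃ φ : ℤ → X, F.IsSolIn W φ ∧ (∃ i, φ i = F.star x) ∧
        F.alphaIn W φ ⊆ A' ∧ F.omegaIn W φ ⊆ A}

/-- `(A, Rp)` is an attractor-repeller pair in the subcomplex `W`. -/
def ARPairIn (W A Rp : Set X) : Prop :=
  F.AttractorIn W A ∧ F.RepellerIn W Rp ∧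
    A = F.InvPartIn W (W \ Rp) ∧ Rp = F.InvPartIn W (W \ A)

/-- `M` is a Morse decomposition of the subcomplex `W`, with admissible order `le`. -/
def MorseDecompIn (W : Set X) {P : Type*} [Finite P] (le : P → P → Prop)
    (M : P → Set X) : Prop :=
  IsPartialOrder P le ∧
  (∀ r, F.IsoInvIn W (M r)) ∧
  (∀ r r', r ≠ r' → Disjoint (M r) (M r')) ∧
  (∀ φ : ℤ → X, F.IsSolIn W φ →
    ∃ r r', le r r' ∧ F.alphaIn W φ ⊆ M r' ∧ F.omegaIn W φ ⊆ M r) ∧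
  (∀ φ : ℤ → X, F.IsSolIn W φ → ∀ r,
    F.alphaIn W φ ⊆ M r → F.omegaIn W φ ⊆ M r → Set.range φ ⊆ M r)

/-- The Morse set `M(I)` of a family of sets indexed by `I ⊆ P`. -/
def MorseSetIn (W : Set X) {P : Type*} (M : P → Set X) (I : Set P) : Set X :=
  ⋃ r ∈ I, ⋃ r' ∈ I, F.ConnIn W (M r') (M r)

/-- `(P₁, P₂)` is an index pair for the isolated invariant set `S`. -/
def IndexPair (S P₁ P₂ : Set X) : Prop :=
  L.Closed P₁ ∧ L.Closed P₂ ∧ P₂ ⊆ P₁ ∧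
  (∀ x ∈ P₂, ∀ y ∈ F.Pi x, y ∈ P₁ → y ∈ P₂) ∧
  (∀ x ∈ P₁, (∃ y ∈ F.Pi x, y ∉ P₁) → x ∈ P₂) ∧
  S = F.InvPartIn Set.univ (P₁ \ P₂)

/-- `x ⤳_A y` : there is a path of length at least two in `A` from `x★` to `y★`. -/
def PathConn (A : Set X) (x y : X) : Prop :=
  ∃ (a b : ℤ) (φ : ℤ → X), a < b ∧
    (∀ i, a ≤ i → i < b → φ (i + 1) ∈ F.Pi (φ i)) ∧
    (∀ i, a ≤ i → i ≤ b → φ i ∈ A) ∧ φ a = F.star x ∧ φ b = F.star y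

/-- The chain recurrent set. -/
def CR : Set X := {x | F.PathConn Set.univ x x}

/-- `B` is a basic set: an equivalence class of mutual connectedness in `CR`. -/
def IsBasicSet (B : Set X) : Prop :=
  ∃ x ∈ F.CR, B = {y ∈ F.CR | F.PathConn Set.univ x y ∧ F.PathConn Set.univ y x}

/-- The set `E_P` of cells of `P₁` all of whose forward solutions meet `P₂`. -/
def Ep (P₁ P₂ : Set X) : Set X :=
  {x ∈ P₁ | ∀ φ : ℕ → X, φ 0 = x → (∀ i, φ (i + 1) ∈ F.Pi (φ i)) → ∃ i, φ i ∈ P₂}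

/-- The preorder `≤_𝒱` induced by the arrows of the multivector field. -/
def leV : X → X → Prop := Relation.ReflTransGen (fun y x => y ∈ F.Pi x)

/-- The multivector field is acyclic: `≤_𝒱` is a partial order. -/
def Acyclic : Prop := ∀ x y, F.leV x y → F.leV y x → x = y

end MVField

end CMVF

open CMVF

variable {R : Type*} [Ring R] {X : Type*} [Fintype X]

namespace CMVF.MVField

variable {R : Type*} [Ring R] {X : Type*} [Fintype X] {L : Lefschetz R X} (F : MVField L)

lemma mem_mclass (x : X) : x ∈ F.mclass x := (F.mclass_spec x).2

lemma mclass_eq {x y : X} (h : y ∈ F.mclass x) : F.mclass y = F.mclass x :=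
  (F.cover y).unique ⟨(F.mclass_spec y).1, (F.mclass_spec y).2⟩ ⟨(F.mclass_spec x).1, h⟩

lemma star_spec (x : X) :
    F.star x ∈ F.mclass x ∧ ∀ z ∈ F.mclass x, L.le z (F.star x) :=
  ((F.isMV _ (F.mclass_spec x).1).2).exists.choose_spec

lemma star_uniq {x m : X} (hm : m ∈ F.mclass x) (hd : ∀ z ∈ F.mclass x, L.le z m) :
    m = F.star x :=
  (F.isMV _ (F.mclass_spec x).1).2.unique ⟨hm, hd⟩ ⟨(F.star_spec x).1, (F.star_spec x).2⟩

lemma star_eq {x y : X} (h : y ∈ F.mclass x) : F.star y = F.star x := by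
  have hc := F.mclass_eq h
  refine F.star_uniq (x := x) ?_ ?_
  · rw [← hc]; exact (F.star_spec y).1
  · rw [← hc]; exact (F.star_spec y).2

lemma star_star (x : X) : F.star (F.star x) = F.star x := F.star_eq (F.star_spec x).1

lemma le_star (x : X) : L.le x (F.star x) := (F.star_spec x).2 x (F.mem_mclass x)

lemma PiIn_univ (x : X) : F.PiIn Set.univ x = F.Pi x := by
  simp [MVField.PiIn]

lemma Pi_of_ne {x : X} (h : ¬ x = F.star x) : F.Pi x = {F.star x} := by
  simp only [MVField.Pi, if_neg h]

lemma Pi_of_eq {x : X} (h : x = F.star x) : F.Pi x = L.clPt x \ F.regPart x := by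
  simp only [MVField.Pi, if_pos h]

lemma regPart_subset (x : X) : F.regPart x ⊆ F.mclass x := by
  simp only [MVField.regPart]
  split
  · exact subset_rfl
  · exact Set.diff_subset

lemma lowerC_eq {N : Set X} (h : F.Compat N) : F.lowerC N = N := by
  ext x
  exact ⟨fun hx => hx.1, fun hx => ⟨hx, h x hx⟩⟩

lemma Pi_nonempty (hX : F.InvariantIn Set.univ Set.univ) (x : X) : (F.Pi x).Nonempty := by
  by_cases h : x = F.star x
  · have hx : x ∈ F.InvPartIn Set.univ Set.univ := by rw [hX]; trivial
    obtain ⟨φ, hsol, ⟨i, hi⟩, -⟩ := hx.2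
    have hs := hsol i
    rw [F.PiIn_univ] at hs
    rw [hi, ← h] at hs
    exact ⟨φ (i + 1), hs⟩
  · rw [F.Pi_of_ne h]
    exact ⟨F.star x, rfl⟩

/-- A forward solution constructed by iterated choice. -/
noncomputable def fwdSol (h : ∀ z : X, (F.Pi z).Nonempty) (y : X) : ℕ → X
  | 0 => y
  | n + 1 => (h (fwdSol h y n)).some

lemma fwdSol_succ (h : ∀ z : X, (F.Pi z).Nonempty) (y : X) (n : ℕ) :
    F.fwdSol h y (n + 1) ∈ F.Pi (F.fwdSol h y n) :=
  (h _).some_mem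

lemma fwdSol_memN (h : ∀ z : X, (F.Pi z).Nonempty) {N : Set X}
    (hN : ∀ x ∈ N, F.Pi x ⊆ N) {y : X} (hy : y ∈ N) : ∀ n, F.fwdSol h y n ∈ N := by
  intro n
  induction n with
  | zero => exact hy
  | succ n ih => exact hN _ ih (F.fwdSol_succ h y n)

lemma sol_through {φ : ℤ → X} (hφ : F.IsSolIn Set.univ φ) (j : ℤ) :
    ∃ i, φ i = F.star (φ j) := by
  by_cases h : φ j = F.star (φ j)
  · exact ⟨j, h⟩
  · have hs := hφ j
    rw [F.PiIn_univ, F.Pi_of_ne h] at hs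
    exact ⟨j + 1, hs⟩

lemma mem_invpart {N : Set X} {φ : ℤ → X} (hφ : F.IsSolIn Set.univ φ)
    (hφN : ∀ i, φ i ∈ F.lowerC N) (j : ℤ) {z : X} (hz : z ∈ F.mclass (φ j)) :
    z ∈ F.InvPartIn Set.univ N := by
  refine ⟨(hφN j).2 hz, φ, hφ, ?_, hφN⟩
  rw [F.star_eq hz]
  exact F.sol_through hφ j

/-- Splicing a backward solution with a chosen forward solution through `y`. -/
lemma splice (hPi : ∀ z : X, (F.Pi z).Nonempty) {N : Set X} (hC : F.Compat N)
    (hT : ∀ x ∈ N, F.PiIn Set.univ x ⊆ N)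
    {φ : ℤ → X} (hφ : F.IsSolIn Set.univ φ) (hφN : ∀ i, φ i ∈ F.lowerC N)
    {i₀ : ℤ} {y : X} (hy : y ∈ F.Pi (φ i₀)) (hyN : y ∈ N) :
    F.FullSolThroughIn Set.univ (F.star y) (F.lowerC N) := by
  have hT' : ∀ x ∈ N, F.Pi x ⊆ N := by
    intro x hx
    have := hT x hx
    rwa [F.PiIn_univ] at this
  set g := F.fwdSol hPi y with hg
  have hgN : ∀ n, g n ∈ N := F.fwdSol_memN hPi hT' hyN
  set ψ : ℤ → X := fun i => if i ≤ 0 then φ (i + i₀) else g (i - 1).toNat with hψ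
  have hψ1 : ψ 1 = y := by simp [hψ, hg, fwdSol]
  have hsol : F.IsSolIn Set.univ ψ := by
    intro i
    rw [F.PiIn_univ]
    by_cases h1 : i + 1 ≤ 0
    · have h2 : i ≤ 0 := by omega
      simp only [hψ, if_pos h1, if_pos h2]
      have hs := hφ (i + i₀)
      rw [F.PiIn_univ] at hs
      rwa [show i + 1 + i₀ = i + i₀ + 1 by ring]
    · by_cases h2 : i ≤ 0
      · have hi0 : i = 0 := by omega
        subst hi0
        have : ψ 0 = φ i₀ := by simp [hψ]
        rw [show (0 : ℤ) + 1 = 1 from rfl, hψ1, this]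
        exact hy
      · simp only [hψ, if_neg h1, if_neg h2]
        rw [show i + 1 - 1 = i by ring, show i.toNat = (i - 1).toNat + 1 by omega]
        exact F.fwdSol_succ hPi y _
  have hvals : ∀ i, ψ i ∈ F.lowerC N := by
    intro i
    by_cases h : i ≤ 0
    · simp only [hψ, if_pos h]; exact hφN _
    · simp only [hψ, if_neg h]
      rw [F.lowerC_eq hC]
      exact hgN _
  refine ⟨ψ, hsol, ?_, hvals⟩
  by_cases h : y = F.star y
  · exact ⟨1, hψ1.trans h⟩
  · have hs := hsol 1
    rw [F.PiIn_univ, hψ1, F.Pi_of_ne h] at hs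
    exact ⟨2, hs⟩

/-- One-step closedness of the invariant part of a trapping region. -/
lemma invpart_facet (hPi : ∀ z : X, (F.Pi z).Nonempty) {N : Set X}
    (hT : F.TrappingIn Set.univ N) {x y : X}
    (hx : x ∈ F.InvPartIn Set.univ N) (hκ : L.κ x y ≠ 0) :
    y ∈ F.InvPartIn Set.univ N := by
  obtain ⟨-, hC, hTr⟩ := hT
  obtain ⟨hxN, φ, hsol, ⟨i₀, hi₀⟩, hvals⟩ := hx
  by_cases hy : y ∈ F.mclass x
  · refine ⟨hC x hxN hy, φ, hsol, ⟨i₀, ?_⟩, hvals⟩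
    rw [hi₀, F.star_eq hy]
  · have hsx : F.star x ∈ N := hC x hxN (F.star_spec x).1
    have hyle : L.le y (F.star x) := Relation.ReflTransGen.head hκ (F.le_star x)
    have hyPi : y ∈ F.Pi (F.star x) := by
      rw [F.Pi_of_eq (F.star_star x).symm]
      refine ⟨⟨F.star x, rfl, hyle⟩, fun hmem => hy ?_⟩
      have := F.regPart_subset (F.star x) hmem
      rwa [F.mclass_eq (F.star_spec x).1] at this
    have hyN : y ∈ N := by
      have := hTr _ hsx
      rw [F.PiIn_univ] at this
      exact this hyPi
    have hyPi' : y ∈ F.Pi (φ i₀) := by rwa [hi₀]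
    exact ⟨hyN, F.splice hPi hC hTr hsol hvals hyPi' hyN⟩

end CMVF.MVField

/-- Theorem (attractor characterization): for `A ⊆ X` the following are equivalent:
(i) `A` is an attractor; (ii) `A` is invariant and closed; (iii) `A` is isolated invariant
and closed; (iv) `A` is isolated invariant, closed and a trapping region. -/
theorem attractor_characterization (L : Lefschetz R X) (F : MVField L)
    (hX : F.InvariantIn Set.univ Set.univ) (A : Set X) :
    List.TFAE [F.AttractorIn Set.univ A,
      F.InvariantIn Set.univ A ∧ L.Closed A,
      F.IsoInvIn Set.univ A ∧ L.Closed A,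
      F.IsoInvIn Set.univ A ∧ L.Closed A ∧ F.TrappingIn Set.univ A] := by
  have hPi : ∀ z : X, (F.Pi z).Nonempty := F.Pi_nonempty hX
  tfae_have 1 → 2 := by
    rintro ⟨N, hT, rfl⟩
    constructor
    · -- invariance
      apply Set.Subset.antisymm
      · intro x hx; exact hx.1
      · rintro x hx
        obtain ⟨hxN, φ, hsol, hthru, hvals⟩ := hx
        refine ⟨⟨hxN, φ, hsol, hthru, hvals⟩, φ, hsol, hthru, fun i => ?_⟩
        exact ⟨F.mem_invpart hsol hvals i (F.mem_mclass (φ i)),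
          fun z hz => F.mem_invpart hsol hvals i hz⟩
    · -- closedness
      apply Set.Subset.antisymm
      · rintro z ⟨a, ha, hle⟩
        induction hle using Relation.ReflTransGen.head_induction_on with
        | refl => exact ha
        | head hr _ ih => exact F.invpart_facet hPi hT ih hr
      · intro a ha
        exact ⟨a, ha, Relation.ReflTransGen.refl⟩
  tfae_have 2 → 3 := by
    rintro ⟨hInv, hCl⟩
    refine ⟨⟨hInv, ?_⟩, hCl⟩
    rintro ⟨a, b, φ, -, -, -, -, -, i, -, -, hmo⟩
    obtain ⟨⟨hcls, -⟩, hnA⟩ := hmo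
    rw [hCl] at hcls
    exact hnA hcls
  tfae_have 3 → 4 := by
    rintro ⟨hIso, hCl⟩
    have hInv : F.InvPartIn Set.univ A = A := hIso.1
    have hC : F.Compat A := by
      intro x hx z hz
      rw [← hInv] at hx
      obtain ⟨-, φ, hsol, ⟨i, hi⟩, hvals⟩ := hx
      have hmc : F.mclass (F.star x) ⊆ A := by
        have := (hvals i).2
        rwa [hi] at this
      rw [F.mclass_eq (F.star_spec x).1] at hmc
      exact hmc hz
    refine ⟨hIso, hCl, Set.subset_univ A, hC, ?_⟩
    intro x hx z hz
    rw [F.PiIn_univ] at hz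
    by_cases h : x = F.star x
    · rw [F.Pi_of_eq h] at hz
      obtain ⟨⟨a, ha, hle⟩, -⟩ := hz
      rw [Set.mem_singleton_iff] at ha
      subst ha
      have : z ∈ L.cls A := ⟨a, hx, hle⟩
      rwa [hCl] at this
    · rw [F.Pi_of_ne h, Set.mem_singleton_iff] at hz
      exact hC x hx (hz ▸ (F.star_spec x).1)
  tfae_have 4 → 1 := by
    rintro ⟨hIso, -, hT⟩
    exact ⟨A, hT, hIso.1.symm⟩
  tfae_finish
end

section
/- Let X be a Lefschetz complex over a ring R with unity, let 𝒱 be a multivector field on X with X invariant, let 𝓜 = {M_r : r ∈ ℙ} be a Morse decomposition of X, and let I ⊆ ℙ. Then the Morse set M(I) := ⋃_{r,r′ ∈ I} C(M_{r′},M_r) is an isolated invariant set. -/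
open scoped Classical

open CMVF

variable {R : Type*} [Ring R] {X : Type*} [Fintype X]


section Aux

variable {L : Lefschetz R X} (F : MVField L)

lemma aux_mclass_eq {x y : X} (h : y ∈ F.mclass x) : F.mclass y = F.mclass x :=
  (F.cover y).unique ⟨(F.mclass_spec y).1, (F.mclass_spec y).2⟩ ⟨(F.mclass_spec x).1, h⟩

lemma aux_star_spec (x : X) :
    F.star x ∈ F.mclass x ∧ ∀ z ∈ F.mclass x, L.le z (F.star x) :=
  ((F.isMV _ (F.mclass_spec x).1).2).exists.choose_spec

lemma aux_star_eq {x y : X} (h : y ∈ F.mclass x) : F.star y = F.star x := by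
  have h1 := aux_star_spec F y
  rw [aux_mclass_eq F h] at h1
  exact ((F.isMV _ (F.mclass_spec x).1).2).unique h1 (aux_star_spec F x)

lemma aux_pi_ne {x : X} (h : x ≠ F.star x) : F.Pi x = {F.star x} := by
  unfold MVField.Pi
  rw [if_neg h]

lemma aux_star_mem_range {ρ : ℤ → X} (hsol : F.IsSolIn Set.univ ρ) (t : ℤ) :
    ∃ j, ρ j = F.star (ρ t) := by
  by_cases h : ρ t = F.star (ρ t)
  · exact ⟨t, h⟩
  · have h2 := (hsol t).1
    rw [aux_pi_ne F h] at h2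
    exact ⟨t + 1, h2⟩

lemma aux_lowerC_mono {A B : Set X} (h : A ⊆ B) : F.lowerC A ⊆ F.lowerC B :=
  fun z hz => ⟨h hz.1, hz.2.trans h⟩

lemma aux_invPart_mono (W : Set X) {A B : Set X} (h : A ⊆ B) :
    F.InvPartIn W A ⊆ F.InvPartIn W B := by
  rintro x ⟨hxA, φ, hsol, hi, hval⟩
  exact ⟨h hxA, φ, hsol, hi, fun i => aux_lowerC_mono F h (hval i)⟩

lemma aux_upperC_mono {A B : Set X} (h : A ⊆ B) : F.upperC A ⊆ F.upperC B := by
  intro z hz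
  simp only [MVField.upperC, Set.mem_iUnion] at hz ⊢
  obtain ⟨x, hx, hzx⟩ := hz
  exact ⟨x, h hx, hzx⟩

lemma aux_alpha_shift {ρ ψ : ℤ → X} (c K : ℤ) (h : ∀ i ≤ K, ρ i = ψ (i + c)) :
    F.alphaIn Set.univ ρ ⊆ F.alphaIn Set.univ ψ := by
  intro x hx
  simp only [MVField.alphaIn, Set.mem_iInter] at hx ⊢
  intro k
  set m : ℕ := k + c.natAbs + K.natAbs with hm
  have h1 : ρ '' {i : ℤ | i ≤ -(m : ℤ)} ⊆ ψ '' {i : ℤ | i ≤ -(k : ℤ)} := by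
    rintro z ⟨i, hi, rfl⟩
    simp only [Set.mem_setOf_eq] at hi
    have hiK : i ≤ K := by omega
    rw [h i hiK]
    exact ⟨i + c, by simp only [Set.mem_setOf_eq]; omega, rfl⟩
  exact aux_invPart_mono F _ (aux_upperC_mono F h1) (hx m)

lemma aux_omega_shift {ρ χ : ℤ → X} (c K : ℤ) (h : ∀ i, K ≤ i → ρ i = χ (i + c)) :
    F.omegaIn Set.univ ρ ⊆ F.omegaIn Set.univ χ := by
  intro x hx
  simp only [MVField.omegaIn, Set.mem_iInter] at hx ⊢
  intro k
  set m : ℕ := k + c.natAbs + K.natAbs with hm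
  have h1 : ρ '' {i : ℤ | (m : ℤ) ≤ i} ⊆ χ '' {i : ℤ | (k : ℤ) ≤ i} := by
    rintro z ⟨i, hi, rfl⟩
    simp only [Set.mem_setOf_eq] at hi
    have hiK : K ≤ i := by omega
    rw [h i hiK]
    exact ⟨i + c, by simp only [Set.mem_setOf_eq]; omega, rfl⟩
  exact aux_invPart_mono F _ (aux_upperC_mono F h1) (hx m)

lemma aux_mem_morse {P : Type*} (M : P → Set X) (I : Set P) {r r' : P}
    (hr : r ∈ I) (hr' : r' ∈ I) {ρ : ℤ → X} (hsol : F.IsSolIn Set.univ ρ)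
    (hα : F.alphaIn Set.univ ρ ⊆ M r') (hω : F.omegaIn Set.univ ρ ⊆ M r)
    {y : X} (hy : ∃ j, ρ j = F.star y) : y ∈ F.MorseSetIn Set.univ M I := by
  simp only [MVField.MorseSetIn, Set.mem_iUnion]
  exact ⟨r, hr, r', hr', ρ, hsol, hy, hα, hω⟩

end Aux

/-- Theorem: the Morse set `M(I)` of a Morse decomposition is an isolated invariant set. -/
theorem morse_set_isolated_invariant (L : Lefschetz R X) (F : MVField L)
    (hX : F.InvariantIn Set.univ Set.univ)
    {P : Type*} [Finite P] (le : P → P → Prop) (M : P → Set X)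
    (hM : F.MorseDecompIn Set.univ le M) (I : Set P) :
    F.IsoInvIn Set.univ (F.MorseSetIn Set.univ M I) := by
  classical
  set S := F.MorseSetIn Set.univ M I with hSdef
  have hmemS : ∀ y : X, y ∈ S ↔ ∃ r ∈ I, ∃ r' ∈ I,
      ∃ ρ : ℤ → X, F.IsSolIn Set.univ ρ ∧ (∃ i, ρ i = F.star y) ∧
        F.alphaIn Set.univ ρ ⊆ M r' ∧ F.omegaIn Set.univ ρ ⊆ M r := by
    intro y
    simp only [hSdef, MVField.MorseSetIn, Set.mem_iUnion, MVField.ConnIn, Set.mem_setOf_eq]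
    constructor
    · rintro ⟨r, hr, r', hr', ρ, h1, h2, h3, h4⟩
      exact ⟨r, hr, r', hr', ρ, h1, h2, h3, h4⟩
    · rintro ⟨r, hr, r', hr', ρ, h1, h2, h3, h4⟩
      exact ⟨r, hr, r', hr', ρ, h1, h2, h3, h4⟩
  constructor
  · -- invariance
    apply Set.eq_of_subset_of_subset
    · intro x hx
      exact hx.1
    · intro x hx
      obtain ⟨r, hr, r', hr', φ, hsol, hi, hα, hω⟩ := (hmemS x).1 hx
      refine ⟨hx, φ, hsol, hi, fun j => ?_⟩
      refine ⟨?_, ?_⟩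
      · exact aux_mem_morse F M I hr hr' hsol hα hω (aux_star_mem_range F hsol j)
      · intro y hy
        refine aux_mem_morse F M I hr hr' hsol hα hω ?_
        rw [aux_star_eq F hy]
        exact aux_star_mem_range F hsol j
  · -- no internal tangency
    rintro ⟨a, b, φ, hab, hpath, hcl, ha, hb, i0, hia, hib, hmo⟩
    have hmoS : φ i0 ∉ S := hmo.2
    have hne_a : i0 ≠ a := fun h => hmoS (h ▸ ha)
    have hne_b : i0 ≠ b := fun h => hmoS (h ▸ hb)
    have hai0 : a < i0 := lt_of_le_of_ne hia (Ne.symm hne_a)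
    have hi0b : i0 < b := lt_of_le_of_ne hib hne_b
    obtain ⟨p, hp, p', hp', ψ, hψsol, ⟨iψ, hiψ⟩, hψα, hψω⟩ := (hmemS (φ a)).1 ha
    obtain ⟨q, hq, q', hq', χ, hχsol, ⟨iχ, hiχ⟩, hχα, hχω⟩ := (hmemS (φ b)).1 hb
    set a' : ℤ := if φ a = F.star (φ a) then a else a + 1 with ha'def
    have ha'le : a ≤ a' ∧ a' ≤ a + 1 := by
      rw [ha'def]; split <;> omega
    have hφa' : φ a' = F.star (φ a) := by
      rw [ha'def]
      split
      · next h => exact h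
      · next h =>
        have h2 := (hpath a le_rfl (hai0.trans hi0b)).1
        rw [aux_pi_ne F h] at h2
        exact h2
    set e : ℤ := if φ b = F.star (φ b) then 0 else 1 with hedef
    set d : ℤ := b - a' with hddef
    have hd : 0 ≤ d := by omega
    set ρ : ℤ → X := fun t =>
      if t ≤ iψ then ψ t
      else if t ≤ iψ + d then φ (a' + (t - iψ))
      else χ (iχ + (t - (iψ + d + e))) with hρdef
    have hρψ : ∀ t ≤ iψ, ρ t = ψ t := by
      intro t ht
      simp only [hρdef, if_pos ht]
    have hρmid : ∀ t, iψ ≤ t → t ≤ iψ + d → ρ t = φ (a' + (t - iψ)) := by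
      intro t h1 h2
      by_cases h3 : t ≤ iψ
      · have ht : t = iψ := le_antisymm h3 h1
        subst ht
        rw [hρψ t le_rfl, hiψ, ← hφa']
        congr 1
        omega
      · simp only [hρdef, if_neg h3, if_pos h2]
    have he01 : e = 0 ∨ e = 1 := by rw [hedef]; split <;> simp
    have hφbe : e = 0 → φ b = F.star (φ b) := by
      intro h0
      rw [hedef] at h0
      by_contra hc
      rw [if_neg hc] at h0
      exact one_ne_zero h0
    have hρχ : ∀ t, iψ + d + e ≤ t → ρ t = χ (iχ + (t - (iψ + d + e))) := by
      intro t ht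
      by_cases h1 : t ≤ iψ
      · have he0 : e = 0 := by rcases he01 with h | h <;> omega
        have htd : t = iψ ∧ d = 0 := by omega
        have hab' : a' = b := by omega
        rw [hρψ t h1, htd.1, hiψ, ← hφa', hab', hφbe he0, ← hiχ]
        congr 1
        omega
      · by_cases h2 : t ≤ iψ + d
        · have he0 : e = 0 := by rcases he01 with h | h <;> omega
          have htd : t = iψ + d := by omega
          have hval : a' + (t - iψ) = b := by omega
          rw [hρmid t (by omega) h2, hval, hφbe he0, ← hiχ]
          congr 1
          omega
        · simp only [hρdef, if_neg h1, if_neg h2]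
    have hρsol : F.IsSolIn Set.univ ρ := by
      intro t
      by_cases h1 : t + 1 ≤ iψ
      · rw [hρψ (t + 1) h1, hρψ t (by omega)]
        exact hψsol t
      · by_cases h2 : t < iψ + d
        · have hr1 : ρ (t + 1) = φ (a' + (t - iψ) + 1) := by
            rw [hρmid (t + 1) (by omega) (by omega)]
            congr 1
            omega
          have hr2 : ρ t = φ (a' + (t - iψ)) := hρmid t (by omega) (by omega)
          rw [hr1, hr2]
          exact hpath (a' + (t - iψ)) (by omega) (by omega)
        · by_cases h3 : e = 1 ∧ t = iψ + d
          · have hr1 : ρ (t + 1) = χ iχ := by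
              rw [hρχ (t + 1) (by omega)]
              congr 1
              omega
            have hr2 : ρ t = φ b := by
              rw [hρmid t (by omega) (by omega)]
              congr 1
              omega
            have hne : φ b ≠ F.star (φ b) := by
              intro hc
              have : e = 0 := by rw [hedef, if_pos hc]
              omega
            rw [hr1, hr2, hiχ]
            constructor
            · rw [aux_pi_ne F hne]
              rfl
            · trivial
          · have hte : iψ + d + e ≤ t := by
              rcases he01 with h | h
              · omega
              · omega
            have hr1 : ρ (t + 1) = χ (iχ + (t - (iψ + d + e)) + 1) := by
              rw [hρχ (t + 1) (by omega)]
              congr 1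
              omega
            have hr2 : ρ t = χ (iχ + (t - (iψ + d + e))) := hρχ t hte
            rw [hr1, hr2]
            exact hχsol (iχ + (t - (iψ + d + e)))
    have hρα : F.alphaIn Set.univ ρ ⊆ M p' := by
      refine (aux_alpha_shift F 0 iψ ?_).trans hψα
      intro i hi
      rw [hρψ i hi, add_zero]
    have hρω : F.omegaIn Set.univ ρ ⊆ M q := by
      refine (aux_omega_shift F (iχ - (iψ + d + e)) (iψ + d + e) ?_).trans hχω
      intro i hi
      rw [hρχ i hi]
      congr 1
      omega
    have hρi0 : ρ (iψ + (i0 - a')) = φ i0 := by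
      rw [hρmid (iψ + (i0 - a')) (by omega) (by omega)]
      congr 1
      omega
    apply hmoS
    refine aux_mem_morse F M I hq hp' hρsol hρα hρω ?_
    rw [← hρi0]
    exact aux_star_mem_range F hρsol (iψ + (i0 - a'))
end
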